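/- arXiv:2207.05542 — 4 statements merged into one kernel-verified Lean document; each statement's English description precedes it below -/
import Mathlib

section
/- For every ε ∈ (0, π/4) there exists a constant A₋ > 0 such that for all θ ∈ [ε, π/2 − ε] and all r > 0: Re(β_θ(r)/α_θ(r)) ≥ A₋ and Re(α_θ(r)/β_θ(r)) ≥ A₋. (These are the diagonal entries of the real part of the PML matrix D in dimension d = 2.) -/
open Real

/-- The PML scaling factor `α_θ(r) = 1 + i f′(r) tan θ`. -/
noncomputable def pmlAlpha (f' : ℝ → ℝ) (θ r : ℝ) : ℂ :=
  1 + Complex.I * (f' r * Real.tan θ)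

/-- The PML scaling factor `β_θ(r) = 1 + i (f(r)/r) tan θ`. -/
noncomputable def pmlBeta (f : ℝ → ℝ) (θ r : ℝ) : ℂ :=
  1 + Complex.I * (f r / r * Real.tan θ)

/-- Uniform positivity of the diagonal entries of the real part of the
two-dimensional radial PML matrix `D`: for every `ε ∈ (0, π/4)` there is `A₋ > 0` with
`Re(β_θ/α_θ) ≥ A₋` and `Re(α_θ/β_θ) ≥ A₋` for all `θ ∈ [ε, π/2 − ε]` and `r > 0`. -/
theorem pml_diag_real_part_lower_bound_2d
    (R₁ R₂ : ℝ) (hR₁ : 0 < R₁) (hR₁₂ : R₁ < R₂)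
    (f f' : ℝ → ℝ)
    (hderiv : ∀ r, HasDerivAt f (f' r) r)
    (hf'cont : Continuous f')
    (hf0 : ∀ r ≤ R₁, f r = 0) (hf'0 : ∀ r ≤ R₁, f' r = 0)
    (hf'nonneg : ∀ r, 0 ≤ f' r)
    (hflin : ∀ r, R₂ ≤ r → f r = r) :
    ∀ ε : ℝ, 0 < ε → ε < π / 4 →
      ∃ Aminus : ℝ, 0 < Aminus ∧
        ∀ θ : ℝ, ε ≤ θ → θ ≤ π / 2 - ε → ∀ r : ℝ, 0 < r →
          Aminus ≤ (pmlBeta f θ r / pmlAlpha f' θ r).re ∧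
          Aminus ≤ (pmlAlpha f' θ r / pmlBeta f θ r).re := by
  intro ε hε hε'
  have hπ := Real.pi_pos
  -- bound on f' on [0, R₂]
  obtain ⟨M, hM⟩ := (isCompact_Icc (a := (0:ℝ)) (b := R₂)).exists_bound_of_continuousOn
    hf'cont.continuousOn
  -- f' r = 1 for r > R₂
  have hf'1 : ∀ r, R₂ < r → f' r = 1 := by
    intro r hr
    have h1 : (id : ℝ → ℝ) =ᶠ[nhds r] f := by
      filter_upwards [Ioi_mem_nhds hr] with x hx
      exact (hflin x (le_of_lt hx)).symm
    exact ((hderiv r).congr_of_eventuallyEq h1).unique (hasDerivAt_id r)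
  -- monotonicity and nonnegativity of f
  have hmono : Monotone f := by
    refine monotone_of_deriv_nonneg (fun r => (hderiv r).differentiableAt) ?_
    intro x; rw [(hderiv x).deriv]; exact hf'nonneg x
  have hfnonneg : ∀ r, 0 ≤ f r := by
    intro r
    rcases le_or_gt r R₁ with h | h
    · rw [hf0 r h]
    · rw [← hf0 R₁ le_rfl]; exact hmono h.le
  -- global bounds
  set K : ℝ := max (max M 1) (R₂ / R₁) with hK
  have hK1 : (1:ℝ) ≤ K := le_trans (le_max_right M 1) (le_max_left _ _)
  have hKR : R₂ / R₁ ≤ K := le_max_right _ _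
  have hf'le : ∀ r : ℝ, 0 < r → f' r ≤ K := by
    intro r hr
    rcases le_or_gt r R₂ with h | h
    · exact le_trans (le_trans (le_abs_self _) (hM r ⟨hr.le, h⟩))
        (le_trans (le_max_left M 1) (le_max_left _ _))
    · rw [hf'1 r h]; exact hK1
  have hfrle : ∀ r : ℝ, 0 < r → f r / r ≤ K := by
    intro r hr
    rcases le_or_gt r R₁ with h | h
    · rw [hf0 r h, zero_div]; linarith
    · rcases le_or_gt r R₂ with h2 | h2
      · have h3 : f r ≤ R₂ := by
          rw [← hflin R₂ le_rfl]; exact hmono h2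
        calc f r / r ≤ R₂ / R₁ :=
              div_le_div₀ (by linarith) h3 hR₁ h.le
          _ ≤ K := hKR
      · rw [hflin r h2.le, div_self hr.ne']; exact hK1
  set T : ℝ := Real.tan (π / 2 - ε) with hT
  have hTpos : 0 < T := Real.tan_pos_of_pos_of_lt_pi_div_two (by linarith) (by linarith)
  refine ⟨1 / (1 + (K * T) ^ 2), by positivity, ?_⟩
  intro θ hθ₁ hθ₂ r hr
  have htan0 : 0 ≤ Real.tan θ :=
    Real.tan_nonneg_of_nonneg_of_le_pi_div_two (by linarith) (by linarith)
  have htanT : Real.tan θ ≤ T := by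
    rcases eq_or_lt_of_le hθ₂ with h | h
    · rw [h]
    · exact (Real.strictMonoOn_tan ⟨by linarith, by linarith⟩ ⟨by linarith, by linarith⟩ h).le
  set a : ℝ := f' r * Real.tan θ with ha
  set b : ℝ := f r / r * Real.tan θ with hb
  have ha0 : 0 ≤ a := mul_nonneg (hf'nonneg r) htan0
  have hb0 : 0 ≤ b := mul_nonneg (div_nonneg (hfnonneg r) hr.le) htan0
  have haK : a ≤ K * T := mul_le_mul (hf'le r hr) htanT htan0 (by linarith)
  have hbK : b ≤ K * T := mul_le_mul (hfrle r hr) htanT htan0 (by linarith)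
  have hαre : (pmlAlpha f' θ r).re = 1 := by simp [pmlAlpha]
  have hαim : (pmlAlpha f' θ r).im = a := by simp [pmlAlpha, ha, -Complex.ofReal_tan]
  have hβre : (pmlBeta f θ r).re = 1 := by simp [pmlBeta]
  have hβim : (pmlBeta f θ r).im = b := by simp [pmlBeta, hb, -Complex.ofReal_tan]
  have key : ∀ x y : ℝ, 0 ≤ x → 0 ≤ y → x ≤ K * T →
      1 / (1 + (K * T) ^ 2) ≤ (1 + y * x) / (1 + x * x) := by
    intro x y hx hy hxK
    refine div_le_div₀ (by nlinarith) (by nlinarith) (by nlinarith) (by nlinarith)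
  constructor
  · rw [Complex.div_re, hαre, hαim, hβre, hβim, Complex.normSq_apply, hαre, hαim]
    calc 1 / (1 + (K * T) ^ 2) ≤ (1 + b * a) / (1 + a * a) := key a b ha0 hb0 haK
      _ = 1 * 1 / (1 * 1 + a * a) + b * a / (1 * 1 + a * a) := by ring
  · rw [Complex.div_re, hαre, hαim, hβre, hβim, Complex.normSq_apply, hβre, hβim]
    calc 1 / (1 + (K * T) ^ 2) ≤ (1 + a * b) / (1 + b * b) := key b a hb0 ha0 hbK
      _ = 1 * 1 / (1 * 1 + b * b) + a * b / (1 * 1 + b * b) := by ring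
end

section
/- Assume in addition that the function r ↦ f(r)/r is nondecreasing on (0, ∞). Then for every ε ∈ (0, π/4) there exists a constant A₋ > 0 such that for all θ ∈ [ε, π/2 − ε] and all r > 0: Re(β_θ(r)²/α_θ(r)) ≥ A₋. (This is the first diagonal entry of the real part of the PML matrix D in dimension d = 3, and the assumption is the standard PML assumption that f_θ(r)/r is nondecreasing.) -/
open Real

lemma pml_re_formula (a b : ℝ) :
    (((1 : ℂ) + Complex.I * b) ^ 2 / (1 + Complex.I * a)).re
      = (1 - b ^ 2 + 2 * b * a) / (1 + a ^ 2) := by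
  rw [Complex.div_re, Complex.normSq_apply]
  simp [pow_two, Complex.add_re, Complex.add_im, Complex.mul_re, Complex.mul_im]
  ring

/-- `f r / r ≤ f' r` for `r > 0` when `f r / r` is nondecreasing. -/
lemma quot_le_deriv (f f' : ℝ → ℝ) (hderiv : ∀ r, HasDerivAt f (f' r) r)
    (hmono : ∀ r s : ℝ, 0 < r → r ≤ s → f r / r ≤ f s / s)
    (r : ℝ) (hr : 0 < r) : f r / r ≤ f' r := by
  have h := (hasDerivAt_iff_tendsto_slope.mp (hderiv r))
  have h' : Filter.Tendsto (slope f r) (nhdsWithin r (Set.Ioi r)) (nhds (f' r)) :=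
    h.mono_left (nhdsWithin_mono r (by intro x hx; exact ne_of_gt hx))
  refine ge_of_tendsto h' ?_
  filter_upwards [self_mem_nhdsWithin] with s hs
  have hsr : r < s := hs
  have hspos : 0 < s := hr.trans hsr
  have hq : f r / r ≤ f s / s := hmono r s hr hsr.le
  have hfs : f r / r * s ≤ f s := by
    rw [div_mul_eq_mul_div, div_le_iff₀ hr]
    exact (div_le_div_iff₀ hr hspos).mp hq
  have hfr : f r / r * r = f r := div_mul_cancel₀ _ (ne_of_gt hr)
  rw [slope_def_field, le_div_iff₀ (by linarith)]
  nlinarith [hfs, hfr]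

/-- Under the standard PML assumption that `r ↦ f(r)/r` is nondecreasing
on `(0, ∞)`, the first diagonal entry of the real part of the three-dimensional radial PML
matrix is uniformly positive: for every `ε ∈ (0, π/4)` there is `A₋ > 0` with
`Re(β_θ(r)²/α_θ(r)) ≥ A₋` for all `θ ∈ [ε, π/2 − ε]` and `r > 0`. -/
theorem pml_diag_real_part_lower_bound_3d
    (R₁ R₂ : ℝ) (hR₁ : 0 < R₁) (hR₁₂ : R₁ < R₂)
    (f f' : ℝ → ℝ)
    (hderiv : ∀ r, HasDerivAt f (f' r) r)
    (hf'cont : Continuous f')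
    (hf0 : ∀ r ≤ R₁, f r = 0) (hf'0 : ∀ r ≤ R₁, f' r = 0)
    (hf'nonneg : ∀ r, 0 ≤ f' r)
    (hflin : ∀ r, R₂ ≤ r → f r = r)
    (hmono : ∀ r s : ℝ, 0 < r → r ≤ s → f r / r ≤ f s / s) :
    ∀ ε : ℝ, 0 < ε → ε < π / 4 →
      ∃ Aminus : ℝ, 0 < Aminus ∧
        ∀ θ : ℝ, ε ≤ θ → θ ≤ π / 2 - ε → ∀ r : ℝ, 0 < r →
          Aminus ≤ (pmlBeta f θ r ^ 2 / pmlAlpha f' θ r).re := by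
  intro ε hε hε'
  -- bound f' on [0, R₂]
  obtain ⟨C, hC⟩ : ∃ C, ∀ x ∈ Set.Icc (0:ℝ) R₂, f' x ≤ C := by
    obtain ⟨C, hC⟩ := ((isCompact_Icc (a := (0:ℝ)) (b := R₂)).image hf'cont).bddAbove
    exact ⟨C, fun x hx => hC (Set.mem_image_of_mem f' hx)⟩
  -- f' r = 1 for r > R₂
  have hone : ∀ r, R₂ < r → f' r = 1 := by
    intro r hr
    have h1 : HasDerivAt f 1 r := by
      have : f =ᶠ[nhds r] id := by
        filter_upwards [Ioi_mem_nhds hr] with x hx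
        exact hflin x (le_of_lt hx)
      exact (hasDerivAt_id r).congr_of_eventuallyEq this
    exact (hderiv r).unique h1
  set M : ℝ := max C 1 with hM
  have hM1 : (1:ℝ) ≤ M := le_max_right _ _
  have hMb : ∀ r : ℝ, 0 < r → f' r ≤ M := by
    intro r hr
    rcases le_or_gt r R₂ with h | h
    · exact le_trans (hC r ⟨hr.le, h⟩) (le_max_left _ _)
    · rw [hone r h]; exact hM1
  set T : ℝ := Real.tan (π / 2 - ε) with hT
  have hπ := Real.pi_pos
  have hTpos : 0 < T := Real.tan_pos_of_pos_of_lt_pi_div_two (by linarith) (by linarith)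
  refine ⟨1 / (1 + (M * T) ^ 2), by positivity, ?_⟩
  intro θ hθ₁ hθ₂ r hr
  have hθpos : 0 < θ := lt_of_lt_of_le hε hθ₁
  have hθlt : θ < π / 2 := by linarith
  have htan_nonneg : 0 ≤ Real.tan θ := Real.tan_nonneg_of_nonneg_of_le_pi_div_two hθpos.le (by linarith)
  have htanT : Real.tan θ ≤ T := by
    rcases eq_or_lt_of_le hθ₂ with h | h
    · rw [h]
    · exact le_of_lt (Real.tan_lt_tan_of_lt_of_lt_pi_div_two (by linarith) (by linarith) h)
  set a : ℝ := f' r * Real.tan θ with ha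
  set b : ℝ := f r / r * Real.tan θ with hb
  have hba : b ≤ a := mul_le_mul_of_nonneg_right
    (quot_le_deriv f f' hderiv hmono r hr) htan_nonneg
  have hbnn : 0 ≤ b := by
    apply mul_nonneg _ htan_nonneg
    rcases le_or_gt r R₁ with h | h
    · rw [hf0 r h]; positivity
    · have := hmono R₁ r hR₁ h.le
      rw [hf0 R₁ le_rfl] at this
      simp at this
      positivity
  have hann : 0 ≤ a := mul_nonneg (hf'nonneg r) htan_nonneg
  have haM : a ≤ M * T := mul_le_mul (hMb r hr) htanT htan_nonneg (by linarith)
  have hre : (pmlBeta f θ r ^ 2 / pmlAlpha f' θ r).re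
      = (1 - b ^ 2 + 2 * b * a) / (1 + a ^ 2) := by
    have := pml_re_formula a b
    simpa [pmlBeta, pmlAlpha, ha, hb] using this
  rw [hre]
  apply div_le_div₀ (by nlinarith) (by nlinarith) (by positivity) (by nlinarith)
end

section
/- Define, for x = (x₁, x₂) ∈ ℝ² with x ≠ 0 and r := ‖x‖: the real orthogonal matrix H(x) := (1/r)·[[x₁, −x₂], [x₂, x₁]], the diagonal complex matrix D_θ(r) := diag(β_θ(r)/α_θ(r), α_θ(r)/β_θ(r)), and the complex matrix A_θ(x) := H(x)·D_θ(r)·H(x)ᵀ. Then for every ε ∈ (0, π/4) there exists A₋ > 0 such that for all θ ∈ [ε, π/2 − ε], all x ∈ ℝ² with x ≠ 0, and all ξ ∈ ℂ²: Re(Σᵢ (A_θ(x)·ξ)ᵢ·conj(ξᵢ)) ≥ A₋·(|ξ₁|² + |ξ₂|²). (This is the strong ellipticity of the two-dimensional radial PML matrix, uniformly in the scaling angle θ.) -/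
open Real Matrix

/-- The real orthogonal matrix `H(x) = (1/r) [[x₁, −x₂], [x₂, x₁]]`, regarded as a
complex matrix, where `r = ‖x‖`. -/
noncomputable def pmlH (x : EuclideanSpace ℝ (Fin 2)) : Matrix (Fin 2) (Fin 2) ℂ :=
  !![((x 0 / ‖x‖ : ℝ) : ℂ), ((-(x 1) / ‖x‖ : ℝ) : ℂ);
     ((x 1 / ‖x‖ : ℝ) : ℂ), ((x 0 / ‖x‖ : ℝ) : ℂ)]

/-- The diagonal complex matrix `D_θ(r) = diag(β_θ(r)/α_θ(r), α_θ(r)/β_θ(r))`. -/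
noncomputable def pmlD (f f' : ℝ → ℝ) (θ r : ℝ) : Matrix (Fin 2) (Fin 2) ℂ :=
  Matrix.diagonal ![pmlBeta f θ r / pmlAlpha f' θ r, pmlAlpha f' θ r / pmlBeta f θ r]

/-- The two-dimensional radial PML matrix `A_θ(x) = H(x) D_θ(‖x‖) H(x)ᵀ`. -/
noncomputable def pmlA (f f' : ℝ → ℝ) (θ : ℝ) (x : EuclideanSpace ℝ (Fin 2)) :
    Matrix (Fin 2) (Fin 2) ℂ :=
  pmlH x * pmlD f f' θ ‖x‖ * (pmlH x)ᵀ

/-!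
In the rotated frame `η = H(x)ᵀ ξ` the form becomes `p |η₀|² + q |η₁|²` with `p = β/α`,
`q = α/β`, and `|η|² = |ξ|²`. Writing `α = 1 + ia`, `β = 1 + ib`, one has
`Re (β/α) = (1 + ab)/(1 + a²)`. Here `a = f′(r) tan θ` and `b = (f(r)/r) tan θ = f′(c) tan θ`
(mean value theorem, `f 0 = 0`) both lie in `[0, K]` with `K = sup f′ · tan (π/2 - ε)`, which is
finite because `f′` is continuous and equals `1` beyond `R₂`. Hence both real parts are at least
`1/(1 + K²)`.
-/

open ComplexConjugate

lemma normSq_mul_add_mul_add_normSq_mul_sub_mul {c s : ℝ} (hcs : c ^ 2 + s ^ 2 = 1) (z w : ℂ) :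
    Complex.normSq (c * z + s * w) + Complex.normSq (c * w - s * z)
      = Complex.normSq z + Complex.normSq w := by
  simp only [Complex.normSq_apply, Complex.add_re, Complex.add_im, Complex.sub_re,
    Complex.sub_im, Complex.re_ofReal_mul, Complex.im_ofReal_mul]
  linear_combination (z.re ^ 2 + z.im ^ 2 + w.re ^ 2 + w.im ^ 2) * hcs

lemma sum_mulVec_rotation_diagonal_mul_conj (c s : ℝ) (p q : ℂ) (ξ : Fin 2 → ℂ) :
    ∑ i, (!![(c : ℂ), -s; s, c] * diagonal ![p, q] * (!![(c : ℂ), -s; s, c])ᵀ).mulVec ξ i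
        * conj (ξ i)
      = p * Complex.normSq (c * ξ 0 + s * ξ 1) + q * Complex.normSq (c * ξ 1 - s * ξ 0) := by
  simp only [← Complex.mul_conj, map_add, map_sub, map_mul, Complex.conj_ofReal]
  simp only [mulVec, dotProduct, cons_mul, empty_mul, Equiv.symm_apply_apply, mul_apply,
    of_apply, cons_val', vecMul_diagonal, cons_val_fin_one, transpose_apply, Fin.sum_univ_two,
    cons_val_zero, cons_val_one]
  ring

lemma le_re_sum_mulVec_rotation_diagonal_mul_conj {c s : ℝ} (hcs : c ^ 2 + s ^ 2 = 1)
    {p q : ℂ} {m : ℝ} (hp : m ≤ p.re) (hq : m ≤ q.re) (ξ : Fin 2 → ℂ) :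
    m * (‖ξ 0‖ ^ 2 + ‖ξ 1‖ ^ 2)
      ≤ (∑ i, (!![(c : ℂ), -s; s, c] * diagonal ![p, q] * (!![(c : ℂ), -s; s, c])ᵀ).mulVec ξ i
          * conj (ξ i)).re := by
  rw [sum_mulVec_rotation_diagonal_mul_conj, Complex.sq_norm, Complex.sq_norm,
    ← normSq_mul_add_mul_add_normSq_mul_sub_mul hcs]
  simp only [Complex.add_re, Complex.re_mul_ofReal, mul_add]
  gcongr <;> exact Complex.normSq_nonneg _

lemma re_one_add_I_mul_div_one_add_I_mul (a b : ℝ) :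
    ((1 + Complex.I * b) / (1 + Complex.I * a)).re = (1 + a * b) / (1 + a ^ 2) := by
  rw [Complex.div_re, Complex.normSq_apply]
  simp only [Complex.add_re, Complex.add_im, Complex.one_re, Complex.one_im,
    Complex.I_mul_re, Complex.I_mul_im, Complex.ofReal_re, Complex.ofReal_im]
  field_simp
  ring

lemma inv_one_add_sq_le_re_one_add_I_mul_div {a b K : ℝ} (ha : a ∈ Set.Icc 0 K) (hb : 0 ≤ b) :
    (1 + K ^ 2)⁻¹ ≤ ((1 + Complex.I * b) / (1 + Complex.I * a)).re := by
  rw [re_one_add_I_mul_div_one_add_I_mul]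
  calc (1 + K ^ 2)⁻¹ ≤ 1 / (1 + a ^ 2) := by
        rw [one_div]; gcongr; exacts [ha.1, ha.2]
    _ ≤ (1 + a * b) / (1 + a ^ 2) := by gcongr; nlinarith [ha.1]

lemma Continuous.bddAbove_image_Ici {g : ℝ → ℝ} (hg : Continuous g) {a R C : ℝ}
    (hC : ∀ r, R < r → g r ≤ C) : BddAbove (g '' Set.Ici a) := by
  have hcover : Set.Ici a ⊆ Set.Icc a R ∪ Set.Ioi R := fun r (hr : a ≤ r) ↦
    (le_or_gt r R).imp (fun h ↦ ⟨hr, h⟩) id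
  refine BddAbove.mono (Set.image_mono hcover) ?_
  rw [Set.image_union]
  exact (isCompact_Icc.bddAbove_image hg.continuousOn).union
    ⟨C, Set.forall_mem_image.2 hC⟩

lemma HasDerivAt.eq_one_of_eq_self_on_Ici {f : ℝ → ℝ} {f'r R r : ℝ} (hf : HasDerivAt f f'r r)
    (hid : ∀ y, R ≤ y → f y = y) (hr : R < r) : f'r = 1 :=
  hf.unique <| (hasDerivAt_id r).congr_of_eventuallyEq <|
    Filter.eventuallyEq_of_mem (Ioi_mem_nhds hr) fun y hy ↦ hid y hy.le

lemma exists_mem_Ioo_div_eq_of_hasDerivAt {f f' : ℝ → ℝ} (hderiv : ∀ r, HasDerivAt f (f' r) r)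
    (hf0 : f 0 = 0) {r : ℝ} (hr : 0 < r) : ∃ c ∈ Set.Ioo 0 r, f r / r = f' c := by
  obtain ⟨c, hc, hslope⟩ := exists_hasDerivAt_eq_slope f f' hr
    (fun y _ ↦ (hderiv y).continuousAt.continuousWithinAt) (fun y _ ↦ hderiv y)
  rw [hf0, sub_zero, sub_zero] at hslope
  exact ⟨c, hc, hslope.symm⟩

lemma tan_mem_Icc_of_mem_Icc {ε θ : ℝ} (hε : 0 < ε) (hθ : θ ∈ Set.Icc ε (π / 2 - ε)) :
    Real.tan θ ∈ Set.Icc 0 (Real.tan (π / 2 - ε)) := by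
  have hπ := Real.pi_pos
  refine ⟨Real.tan_nonneg_of_nonneg_of_le_pi_div_two (by linarith [hθ.1]) (by linarith [hθ.2]),
    Real.strictMonoOn_tan.monotoneOn ⟨by linarith [hθ.1], by linarith [hθ.2]⟩
      ⟨by linarith [hθ.1, hθ.2], by linarith⟩ hθ.2⟩

lemma pmlH_eq (x : EuclideanSpace ℝ (Fin 2)) :
    pmlH x = !![((x 0 / ‖x‖ : ℝ) : ℂ), -(x 1 / ‖x‖ : ℝ); (x 1 / ‖x‖ : ℝ), (x 0 / ‖x‖ : ℝ)] := by
  simp [pmlH, neg_div]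

lemma div_norm_sq_add_div_norm_sq {x : EuclideanSpace ℝ (Fin 2)} (hx : x ≠ 0) :
    (x 0 / ‖x‖) ^ 2 + (x 1 / ‖x‖) ^ 2 = 1 := by
  rw [div_pow, div_pow, ← add_div, div_eq_one_iff_eq (by positivity),
    EuclideanSpace.norm_sq_eq, Fin.sum_univ_two, Real.norm_eq_abs, Real.norm_eq_abs, sq_abs, sq_abs]

theorem pml_matrix_strong_ellipticity_2d_general
    (R₁ R₂ : ℝ) (hR₁ : 0 < R₁)
    (f f' : ℝ → ℝ)
    (hderiv : ∀ r, HasDerivAt f (f' r) r)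
    (hf'cont : Continuous f')
    (hf0 : ∀ r ≤ R₁, f r = 0)
    (hf'nonneg : ∀ r, 0 ≤ f' r)
    (hflin : ∀ r, R₂ ≤ r → f r = r) :
    ∀ ε : ℝ, 0 < ε → ε < π / 4 →
      ∃ Aminus : ℝ, 0 < Aminus ∧
        ∀ θ : ℝ, ε ≤ θ → θ ≤ π / 2 - ε →
          ∀ x : EuclideanSpace ℝ (Fin 2), x ≠ 0 →
            ∀ ξ : Fin 2 → ℂ,
              Aminus * (‖ξ 0‖ ^ 2 + ‖ξ 1‖ ^ 2)
                ≤ (∑ i, (pmlA f f' θ x).mulVec ξ i * starRingEnd ℂ (ξ i)).re := by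
  intro ε hε _
  obtain ⟨M, hM⟩ := hf'cont.bddAbove_image_Ici (a := 0) fun r hr ↦
    ((hderiv r).eq_one_of_eq_self_on_Ici hflin hr).le
  set K := M * Real.tan (π / 2 - ε)
  refine ⟨(1 + K ^ 2)⁻¹, by positivity, fun θ hθ hθ' x hx ξ ↦ ?_⟩
  have htan := tan_mem_Icc_of_mem_Icc hε ⟨hθ, hθ'⟩
  have hscaled : ∀ r, 0 ≤ r → f' r * Real.tan θ ∈ Set.Icc 0 K := fun r hr ↦
    ⟨mul_nonneg (hf'nonneg r) htan.1,
      mul_le_mul (hM ⟨r, hr, rfl⟩) htan.2 htan.1 ((hf'nonneg r).trans (hM ⟨r, hr, rfl⟩))⟩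
  have hr : 0 < ‖x‖ := norm_pos_iff.2 hx
  obtain ⟨c, hc, hslope⟩ := exists_mem_Ioo_div_eq_of_hasDerivAt hderiv (hf0 0 hR₁.le) hr
  have hα := hscaled ‖x‖ hr.le
  have hβ : f ‖x‖ / ‖x‖ * Real.tan θ ∈ Set.Icc 0 K := hslope ▸ hscaled c hc.1.le
  simp only [pmlA, pmlH_eq, pmlD, pmlAlpha, pmlBeta, ← Complex.ofReal_mul, ← Complex.ofReal_div]
  exact le_re_sum_mulVec_rotation_diagonal_mul_conj (div_norm_sq_add_div_norm_sq hx)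
    (inv_one_add_sq_le_re_one_add_I_mul_div hα hβ.1)
    (inv_one_add_sq_le_re_one_add_I_mul_div hβ hα.1) ξ

/-- Strong ellipticity of the two-dimensional radial PML matrix,
uniformly in the scaling angle: for every `ε ∈ (0, π/4)` there is `A₋ > 0` such that
`Re⟨A_θ(x) ξ, ξ⟩ ≥ A₋ (|ξ₁|² + |ξ₂|²)` for all `θ ∈ [ε, π/2 − ε]`, `x ≠ 0`, `ξ ∈ ℂ²`. -/
theorem pml_matrix_strong_ellipticity_2d
    (R₁ R₂ : ℝ) (hR₁ : 0 < R₁) (hR₁₂ : R₁ < R₂)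
    (f f' : ℝ → ℝ)
    (hderiv : ∀ r, HasDerivAt f (f' r) r)
    (hf'cont : Continuous f')
    (hf0 : ∀ r ≤ R₁, f r = 0) (hf'0 : ∀ r ≤ R₁, f' r = 0)
    (hf'nonneg : ∀ r, 0 ≤ f' r)
    (hflin : ∀ r, R₂ ≤ r → f r = r) :
    ∀ ε : ℝ, 0 < ε → ε < π / 4 →
      ∃ Aminus : ℝ, 0 < Aminus ∧
        ∀ θ : ℝ, ε ≤ θ → θ ≤ π / 2 - ε →
          ∀ x : EuclideanSpace ℝ (Fin 2), x ≠ 0 →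
            ∀ ξ : Fin 2 → ℂ,
              Aminus * (‖ξ 0‖ ^ 2 + ‖ξ 1‖ ^ 2)
                ≤ (∑ i, (pmlA f f' θ x).mulVec ξ i * starRingEnd ℂ (ξ i)).re :=
  pml_matrix_strong_ellipticity_2d_general R₁ R₂ hR₁ f f' hderiv hf'cont hf0 hf'nonneg hflin
end

section
/- Suppose η ≥ 0 is a real number such that inf_{w_N ∈ V_N} ‖S* f − w_N‖_V ≤ η·‖f‖_W for every f ∈ W, and suppose C_cont·√γ₂·η ≤ √(γ₁/2). Then for every u ∈ V there exists a unique u_N ∈ V_N (the Galerkin solution) satisfying a(u_N, w_N) = a(u, w_N) for all w_N ∈ V_N, and this u_N satisfies the quasi-optimality bound ‖u − u_N‖_V ≤ (2·C_cont/γ₁)·inf_{w_N ∈ V_N} ‖u − w_N‖_V. -/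
open scoped ComplexConjugate InnerProductSpace

/-!
Schatz's duality argument. If `e ∈ V` is `a`-orthogonal to `V_N`, then testing with the adjoint
solution `S* (ι e)` and subtracting any element of `V_N` gives the Aubin–Nitsche bound
`‖ι e‖ ≤ C_cont η ‖e‖`; the smallness of `η` then lets this absorb the term `γ₂ ‖ι e‖²` of
Gårding's inequality, so `a` is coercive with constant `γ₁ / 2` on such `e`. Applied to elements
of `V_N` this makes the discrete problem injective, hence uniquely solvable by finite
dimensionality, and applied to the Galerkin error it yields Céa's estimate with `γ₁ / 2`.
-/

section SesqForm
variable {R M : Type*} [CommRing R] [StarRing R] [AddCommGroup M] [Module R M]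

def sesqFormOfMap (a : M → M → R)
    (ha₁ : ∀ (c : R) (u u' v : M), a (c • u + u') v = c * a u v + a u' v)
    (ha₂ : ∀ (c : R) (u v v' : M), a u (c • v + v') = conj c * a u v + a u v') :
    M →ₗ[R] M →ₗ⋆[R] R :=
  have hzero₁ : ∀ v, a 0 v = 0 := fun v => by simpa using ha₁ (-1) 0 0 v
  have hzero₂ : ∀ u, a u 0 = 0 := fun u => by simpa using ha₂ (-1) u 0 0
  LinearMap.mk₂'ₛₗ _ _ a (fun u u' v => by simpa using ha₁ 1 u u' v)
    (fun c u v => by simpa [hzero₁] using ha₁ c u 0 v)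
    (fun u v v' => by simpa using ha₂ 1 u v v')
    (fun c u v => by simpa [hzero₂] using ha₂ c u v 0)

theorem LinearMap.SeparatingLeft.injective {B : M →ₗ[R] M →ₗ⋆[R] R} (hB : B.SeparatingLeft) :
    Function.Injective B :=
  LinearMap.ker_eq_bot.mp (LinearMap.separatingLeft_iff_ker_eq_bot.mp hB)

end SesqForm

section Riesz
variable {𝕜 E : Type*} [RCLike 𝕜] [NormedAddCommGroup E] [InnerProductSpace 𝕜 E]
  [FiniteDimensional 𝕜 E]

theorem exists_inner_eq_of_conjLinear (φ : E →ₗ⋆[𝕜] 𝕜) : ∃ v : E, ∀ y, ⟪y, v⟫_𝕜 = φ y := by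
  have : CompleteSpace E := FiniteDimensional.complete 𝕜 E
  let ψ : E →ₗ[𝕜] 𝕜 :=
    { toFun := fun y => conj (φ y)
      map_add' := by simp
      map_smul' := by simp }
  refine ⟨(InnerProductSpace.toDual 𝕜 E).symm ψ.toContinuousLinearMap, fun y => ?_⟩
  rw [← inner_conj_symm, InnerProductSpace.toDual_symm_apply]
  simp [ψ]

theorem LinearMap.SeparatingLeft.surjective {B : E →ₗ[𝕜] E →ₗ⋆[𝕜] 𝕜} (hB : B.SeparatingLeft) :
    Function.Surjective B := by
  -- `J` is the Riesz isomorphism `v ↦ ⟪·, v⟫`, so `J⁻¹ ∘ B` is an injective endomorphism.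
  let J : E →ₗ[𝕜] E →ₗ⋆[𝕜] 𝕜 := (innerₛₗ 𝕜).flip
  have hJ : Function.Bijective J := by
    refine ⟨fun v w h => ext_inner_left 𝕜 fun y => LinearMap.congr_fun h y, fun φ => ?_⟩
    obtain ⟨v, hv⟩ := exists_inner_eq_of_conjLinear φ
    exact ⟨v, LinearMap.ext hv⟩
  let Je := LinearEquiv.ofBijective J hJ
  have hT : Function.Injective (Je.symm.toLinearMap ∘ₗ B) := Je.symm.injective.comp hB.injective
  intro φ
  obtain ⟨x, hx⟩ := LinearMap.injective_iff_surjective.mp hT (Je.symm φ)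
  exact ⟨x, Je.symm.injective hx⟩

end Riesz

section Galerkin
variable {𝕜 V W : Type*} [RCLike 𝕜] [NormedAddCommGroup V] [InnerProductSpace 𝕜 V]
  [NormedAddCommGroup W] [InnerProductSpace 𝕜 W]
  (B : V →ₗ[𝕜] V →ₗ⋆[𝕜] 𝕜) (F : Submodule 𝕜 V)

theorem existsUnique_galerkin_solution [FiniteDimensional 𝕜 F]
    (hB : (B.domRestrict₁₂ F F).SeparatingLeft) (u : V) :
    ∃! uN : F, ∀ w : F, B uN w = B u w := by
  obtain ⟨uN, huN⟩ := hB.surjective ((B u).domRestrict F)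
  refine ⟨uN, fun w => LinearMap.congr_fun huN w, fun vN hvN => hB.injective ?_⟩
  rw [huN]
  exact LinearMap.ext hvN

theorem separatingLeft_domRestrict₁₂_of_coercive {γ : ℝ} (hγ : 0 < γ)
    (hcoer : ∀ e : V, (∀ w : F, B e w = 0) → γ * ‖e‖ ^ 2 ≤ RCLike.re (B e e)) :
    (B.domRestrict₁₂ F F).SeparatingLeft := by
  intro d hd
  have h := hcoer d hd
  rw [show B d d = 0 from hd d, map_zero] at h
  have hsq : ‖(d : V)‖ ^ 2 = 0 := le_antisymm (nonpos_of_mul_nonpos_right h hγ) (sq_nonneg _)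
  exact Subtype.ext (norm_eq_zero.mp (pow_eq_zero_iff two_ne_zero |>.mp hsq))

variable {F} {C η : ℝ}

theorem norm_apply_le_of_galerkin_orthogonal (ι : V →L[𝕜] W) (S : W → V)
    (hC : 0 ≤ C) (hη : 0 ≤ η) (hcont : ∀ u v, ‖B u v‖ ≤ C * ‖u‖ * ‖v‖)
    (hS : ∀ v f, B v (S f) = ⟪f, ι v⟫_𝕜) (happrox : ∀ f, ⨅ w : F, ‖S f - w‖ ≤ η * ‖f‖)
    {e : V} (he : ∀ w : F, B e w = 0) : ‖ι e‖ ≤ C * η * ‖e‖ := by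
  have hdist : ∀ w : F, ‖ι e‖ ^ 2 ≤ C * ‖e‖ * ‖S (ι e) - w‖ := fun w => by
    have hval : B e (S (ι e) - w) = (‖ι e‖ : 𝕜) ^ 2 := by
      rw [map_sub, he w, sub_zero, hS, inner_self_eq_norm_sq_to_K]
    simpa [hval] using hcont e (S (ι e) - w)
  have hinf : ‖ι e‖ ^ 2 ≤ C * ‖e‖ * (η * ‖ι e‖) := by
    refine le_trans ?_ (mul_le_mul_of_nonneg_left (happrox (ι e)) (by positivity))
    rw [Real.mul_iInf_of_nonneg (by positivity)]
    exact le_ciInf hdist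
  have hb : 0 ≤ C * η * ‖e‖ := by positivity
  nlinarith

variable {γ₁ γ₂ : ℝ}

theorem half_mul_norm_sq_le_re_of_galerkin_orthogonal (ι : V →L[𝕜] W) (S : W → V)
    (hC : 0 ≤ C) (hη : 0 ≤ η) (hγ₂ : 0 ≤ γ₂) (hcont : ∀ u v, ‖B u v‖ ≤ C * ‖u‖ * ‖v‖)
    (hgarding : ∀ w, γ₁ * ‖w‖ ^ 2 - γ₂ * ‖ι w‖ ^ 2 ≤ RCLike.re (B w w))
    (hS : ∀ v f, B v (S f) = ⟪f, ι v⟫_𝕜) (happrox : ∀ f, ⨅ w : F, ‖S f - w‖ ≤ η * ‖f‖)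
    (hsmall : γ₂ * (C * η) ^ 2 ≤ γ₁ / 2) {e : V} (he : ∀ w : F, B e w = 0) :
    γ₁ / 2 * ‖e‖ ^ 2 ≤ RCLike.re (B e e) := by
  have hιe := norm_apply_le_of_galerkin_orthogonal B ι S hC hη hcont hS happrox he
  have hιe_sq : γ₂ * ‖ι e‖ ^ 2 ≤ γ₁ / 2 * ‖e‖ ^ 2 := calc
    γ₂ * ‖ι e‖ ^ 2 ≤ γ₂ * (C * η * ‖e‖) ^ 2 := by gcongr
    _ = γ₂ * (C * η) ^ 2 * ‖e‖ ^ 2 := by ring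
    _ ≤ γ₁ / 2 * ‖e‖ ^ 2 := by gcongr
  linarith [hgarding e]

theorem norm_sub_le_mul_iInf_of_galerkin_orthogonal {γ : ℝ} (hγ : 0 < γ) (hC : 0 ≤ C)
    (hcont : ∀ u v, ‖B u v‖ ≤ C * ‖u‖ * ‖v‖) {u : V} {uN : F}
    (horth : ∀ w : F, B (u - uN) w = 0)
    (hcoer : γ * ‖u - uN‖ ^ 2 ≤ RCLike.re (B (u - uN) (u - uN))) :
    ‖u - uN‖ ≤ C / γ * ⨅ w : F, ‖u - w‖ := by
  have hbest : ∀ w : F, ‖u - uN‖ ≤ C / γ * ‖u - w‖ := fun w => by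
    have hsplit : B (u - uN) (u - uN) = B (u - uN) (u - w) := by
      rw [← sub_eq_zero, ← map_sub, sub_sub_sub_cancel_left, ← Submodule.coe_sub, horth]
    have hre : γ * ‖u - uN‖ ^ 2 ≤ C * ‖u - w‖ * ‖u - uN‖ := calc
      γ * ‖u - uN‖ ^ 2 ≤ ‖B (u - uN) (u - w)‖ := hcoer.trans (hsplit ▸ RCLike.re_le_norm _)
      _ ≤ C * ‖u - w‖ * ‖u - uN‖ := by linarith [hcont (u - uN) (u - w)]
    rw [div_mul_eq_mul_div, le_div_iff₀ hγ]
    have : 0 ≤ C * ‖u - w‖ := by positivity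
    nlinarith
  rw [Real.mul_iInf_of_nonneg (by positivity)]
  exact le_ciInf hbest

end Galerkin

theorem galerkin_quasioptimality_general
    (V W : Type*)
    [NormedAddCommGroup V] [InnerProductSpace ℂ V]
    [NormedAddCommGroup W] [InnerProductSpace ℂ W]
    (ι : V →L[ℂ] W)
    (a : V → V → ℂ)
    (ha₁ : ∀ (c : ℂ) (u u' v : V), a (c • u + u') v = c * a u v + a u' v)
    (ha₂ : ∀ (c : ℂ) (u v v' : V), a u (c • v + v') = conj c * a u v + a u v')
    (Ccont γ₁ γ₂ : ℝ) (hCcont : 0 < Ccont) (hγ₁ : 0 < γ₁) (hγ₂ : 0 < γ₂)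
    (hcont : ∀ u v : V, ‖a u v‖ ≤ Ccont * ‖u‖ * ‖v‖)
    (hgarding : ∀ w : V, γ₁ * ‖w‖ ^ 2 - γ₂ * ‖ι w‖ ^ 2 ≤ (a w w).re)
    (VN : Submodule ℂ V) [FiniteDimensional ℂ VN]
    (Sstar : W → V)
    (hSstar : ∀ (v : V) (f : W), a v (Sstar f) = (inner ℂ (f : W) (ι v) : ℂ))
    (η : ℝ) (hη : 0 ≤ η)
    (happrox : ∀ f : W, (⨅ wN : VN, ‖Sstar f - (wN : V)‖) ≤ η * ‖f‖)
    (hsmall : Ccont * Real.sqrt γ₂ * η ≤ Real.sqrt (γ₁ / 2)) :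
    ∀ u : V,
      (∃! uN : VN, ∀ wN : VN, a (uN : V) (wN : V) = a u (wN : V)) ∧
      (∀ uN : VN, (∀ wN : VN, a (uN : V) (wN : V) = a u (wN : V)) →
        ‖u - (uN : V)‖ ≤ (2 * Ccont / γ₁) * ⨅ wN : VN, ‖u - (wN : V)‖) := by
  let B : V →ₗ[ℂ] V →ₗ⋆[ℂ] ℂ := sesqFormOfMap a ha₁ ha₂
  have hsmall_sq : γ₂ * (Ccont * η) ^ 2 ≤ γ₁ / 2 := calc
    γ₂ * (Ccont * η) ^ 2 = (Ccont * Real.sqrt γ₂ * η) ^ 2 := by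
      rw [mul_pow, mul_pow, mul_pow, Real.sq_sqrt hγ₂.le]; ring
    _ ≤ γ₁ / 2 := (Real.le_sqrt (by positivity) (by positivity)).mp hsmall
  have hcoer : ∀ e : V, (∀ w : VN, B e w = 0) → γ₁ / 2 * ‖e‖ ^ 2 ≤ RCLike.re (B e e) :=
    fun e he => half_mul_norm_sq_le_re_of_galerkin_orthogonal B ι Sstar hCcont.le hη hγ₂.le hcont
      hgarding hSstar happrox hsmall_sq he
  intro u
  refine ⟨existsUnique_galerkin_solution B VN
    (separatingLeft_domRestrict₁₂_of_coercive B VN (half_pos hγ₁) hcoer) u, fun uN huN => ?_⟩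
  have horth : ∀ w : VN, B (u - uN) w = 0 := fun w => by
    rw [map_sub, LinearMap.sub_apply, sub_eq_zero]
    exact (huN w).symm
  rw [mul_comm 2, ← div_div_eq_mul_div]
  exact norm_sub_le_mul_iInf_of_galerkin_orthogonal B (half_pos hγ₁) hCcont.le hcont horth
    (hcoer _ horth)

/-- The classic duality (Schatz) argument: if the adjoint approximation
quantity `η` satisfies `inf_{w_N ∈ V_N} ‖S* f − w_N‖ ≤ η ‖f‖` for all `f`, and
`C_cont √γ₂ η ≤ √(γ₁/2)`, then for every `u ∈ V` the Galerkin solution `u_N ∈ V_N`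
exists, is unique, and is quasi-optimal with constant `2 C_cont / γ₁`. -/
theorem galerkin_quasioptimality
    (V W : Type*)
    [NormedAddCommGroup V] [InnerProductSpace ℂ V] [CompleteSpace V]
    [NormedAddCommGroup W] [InnerProductSpace ℂ W] [CompleteSpace W]
    (ι : V →L[ℂ] W)
    (a : V → V → ℂ)
    (ha₁ : ∀ (c : ℂ) (u u' v : V), a (c • u + u') v = c * a u v + a u' v)
    (ha₂ : ∀ (c : ℂ) (u v v' : V), a u (c • v + v') = conj c * a u v + a u v')
    (Ccont γ₁ γ₂ : ℝ) (hCcont : 0 < Ccont) (hγ₁ : 0 < γ₁) (hγ₂ : 0 < γ₂)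
    (hcont : ∀ u v : V, ‖a u v‖ ≤ Ccont * ‖u‖ * ‖v‖)
    (hgarding : ∀ w : V, γ₁ * ‖w‖ ^ 2 - γ₂ * ‖ι w‖ ^ 2 ≤ (a w w).re)
    (VN : Submodule ℂ V) [FiniteDimensional ℂ VN]
    (Sstar : W → V)
    (hSstar : ∀ (v : V) (f : W), a v (Sstar f) = (inner ℂ (f : W) (ι v) : ℂ))
    (η : ℝ) (hη : 0 ≤ η)
    (happrox : ∀ f : W, (⨅ wN : VN, ‖Sstar f - (wN : V)‖) ≤ η * ‖f‖)
    (hsmall : Ccont * Real.sqrt γ₂ * η ≤ Real.sqrt (γ₁ / 2)) :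
    ∀ u : V,
      (∃! uN : VN, ∀ wN : VN, a (uN : V) (wN : V) = a u (wN : V)) ∧
      (∀ uN : VN, (∀ wN : VN, a (uN : V) (wN : V) = a u (wN : V)) →
        ‖u - (uN : V)‖ ≤ (2 * Ccont / γ₁) * ⨅ wN : VN, ‖u - (wN : V)‖) :=
  galerkin_quasioptimality_general V W ι a ha₁ ha₂ Ccont γ₁ γ₂ hCcont hγ₁ hγ₂ hcont hgarding VN
    Sstar hSstar η hη happrox hsmall
end
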